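/- With x¹ and φ(c) := 1/(1 + TV^c(x¹,[0,1])) as above (with Σ aₙ = ∞), one has lim_{c→0+} φ(c)·TV^c(x¹,[0,t]) = 0 for every t ∈ [0,1), while lim_{c→0+} φ(c)·TV^c(x¹,[0,1]) = 1. -/

import Mathlib

/-!
For `u < 1` the interval `[0, u]` lies in some `[0, t_M]`, on which `x` is piecewise monotone and
hence of finite total variation `V`; every truncated variation on `[0, u]` is at most `V`, uniformly
in `c`. On `[0, 1]` the partition `t_0 < ⋯ < t_{2N} ≤ 1` gives
`TV^c(x, [0, 1]) ≥ 2 ∑_{k<N} (a_k - c)`, which tends to infinity as `c → 0+`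
since `∑ a_k = ∞`.
So `φ(c) → 0`, and `φ(c) · TV^c(x, [0, 1]) = 1 - φ(c) → 1`.

As `truncVarR` is an `sSup` in `ℝ`, that lower bound also needs the truncated sums on `[0, 1]` to
be bounded for each `c > 0`: once `a_M ≤ c / 2`, increments of `x` after `t_{2M}` are at most `c`,
so clipping a partition at `t_{2M}` bounds its truncated sum by the variation on `[0, t_{2M}]`.
-/

open Filter

/-- Real-valued truncated variation of `x` with parameter `c` on `[s,t]`. -/
noncomputable def truncVarR (x : ℝ → ℝ) (c s t : ℝ) : ℝ :=
  sSup {v : ℝ | ∃ (n : ℕ) (u : Fin (n + 1) → ℝ), Monotone u ∧ u 0 = s ∧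
    u (Fin.last n) = t ∧
    v = ∑ i : Fin n, max (|x (u i.succ) - x (u i.castSucc)| - c) 0}

open Set Finset Topology

theorem AntitoneOn.locallyBoundedVariationOn {α : Type*} [LinearOrder α] {f : α → ℝ}
    {s : Set α} (hf : AntitoneOn f s) : LocallyBoundedVariationOn f s := by
  simpa [Function.comp_def] using
    (LipschitzWith.id.neg (E := ℝ)).comp_locallyBoundedVariationOn
      hf.neg.locallyBoundedVariationOn

theorem Monotone.exists_mem_Ico_succ {α : Type*} [LinearOrder α] {t : ℕ → α}
    (ht : Monotone t) {j m : ℕ} {s : α} (hj : t j ≤ s) (hm : s < t m) :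
    ∃ k, j ≤ k ∧ s ∈ Ico (t k) (t (k + 1)) := by
  have hjm : j ≤ m := (ht.reflect_lt (hj.trans_lt hm)).le
  induction m, hjm using Nat.le_induction with
  | base => exact absurd hm hj.not_gt
  | succ m hjm ih =>
    by_cases h : s < t m
    · exact ih h
    · exact ⟨m, hjm, not_lt.1 h, hm⟩

theorem eVariationOn.sum_fin_le {α E : Type*} [LinearOrder α] [PseudoEMetricSpace E]
    {f : α → E} {s : Set α} {n : ℕ} {u : Fin (n + 1) → α} (hu : Monotone u)
    (us : ∀ i, u i ∈ s) :
    ∑ i : Fin n, edist (f (u i.succ)) (f (u i.castSucc)) ≤ eVariationOn f s := by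
  set v : ℕ → α := fun i => u ⟨min i n, by omega⟩
  have hv : Monotone v := fun i j hij => hu (Fin.mk_le_mk.2 (by omega))
  convert eVariationOn.sum_le (f := f) hv (fun i => us _) using 1
  rw [← Fin.sum_univ_eq_sum_range (fun i => edist (f (v (i + 1))) (f (v i)))]
  refine Finset.sum_congr rfl fun i _ => ?_
  congr 3 <;> ext <;> simp [Nat.succ_le_of_lt i.2, i.2.le]

theorem BoundedVariationOn.sum_abs_sub_le {α : Type*} [LinearOrder α] {f : α → ℝ}
    {s : Set α} (hf : BoundedVariationOn f s) {n : ℕ} {u : Fin (n + 1) → α} (hu : Monotone u)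
    (us : ∀ i, u i ∈ s) :
    ∑ i : Fin n, |f (u i.succ) - f (u i.castSucc)| ≤ (eVariationOn f s).toReal := by
  rw [← ENNReal.ofReal_le_iff_le_toReal hf, ENNReal.ofReal_sum_of_nonneg fun _ _ => abs_nonneg _]
  simpa only [edist_dist, Real.dist_eq] using eVariationOn.sum_fin_le (f := f) hu us

def truncSum (x : ℝ → ℝ) (c : ℝ) {n : ℕ} (u : Fin (n + 1) → ℝ) : ℝ :=
  ∑ i : Fin n, max (|x (u i.succ) - x (u i.castSucc)| - c) 0

section TruncatedVariation

variable {x : ℝ → ℝ} {c s T B : ℝ}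

theorem truncSum_nonneg {n : ℕ} (u : Fin (n + 1) → ℝ) : 0 ≤ truncSum x c u :=
  Finset.sum_nonneg fun _ _ => le_max_right _ _

theorem truncVarR_nonneg : 0 ≤ truncVarR x c s T :=
  Real.sSup_nonneg fun _ ⟨_, u, _, _, _, hv⟩ => hv ▸ truncSum_nonneg u

theorem truncVarR_le (hB0 : 0 ≤ B)
    (hB : ∀ n (u : Fin (n + 1) → ℝ), Monotone u → u 0 = s → u (Fin.last n) = T →
      truncSum x c u ≤ B) :
    truncVarR x c s T ≤ B :=
  Real.sSup_le (fun _ ⟨n, u, hu, h0, hT, hv⟩ => hv ▸ hB n u hu h0 hT) hB0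

theorem truncSum_le_truncVarR
    (hB : ∀ n (u : Fin (n + 1) → ℝ), Monotone u → u 0 = s → u (Fin.last n) = T →
      truncSum x c u ≤ B)
    {n : ℕ} {u : Fin (n + 1) → ℝ} (hu : Monotone u) (h0 : u 0 = s) (hT : u (Fin.last n) = T) :
    truncSum x c u ≤ truncVarR x c s T :=
  le_csSup ⟨B, fun _ ⟨m, v, hv, hv0, hvT, h⟩ => h ▸ hB m v hv hv0 hvT⟩
    ⟨n, u, hu, h0, hT, rfl⟩

theorem truncSum_le_eVariationOn (hc : 0 ≤ c) {S : Set ℝ} (hx : BoundedVariationOn x S)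
    {n : ℕ} {u : Fin (n + 1) → ℝ} (hu : Monotone u) (us : ∀ i, u i ∈ S) :
    truncSum x c u ≤ (eVariationOn x S).toReal :=
  (Finset.sum_le_sum fun _ _ => max_le (by linarith) (abs_nonneg _)).trans
    (hx.sum_abs_sub_le hu us)

theorem truncVarR_le_eVariationOn (hc : 0 ≤ c) {S : Set ℝ} (hS : Icc s T ⊆ S)
    (hx : BoundedVariationOn x S) :
    truncVarR x c s T ≤ (eVariationOn x S).toReal :=
  truncVarR_le ENNReal.toReal_nonneg fun _ _ hu h0 hT =>
    truncSum_le_eVariationOn hc hx hu fun i =>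
      hS ⟨h0 ▸ hu (Fin.zero_le i), hT ▸ hu (Fin.le_last i)⟩

variable {A τ : ℝ}

theorem max_abs_sub_sub_le_abs_sub_min (hc : 0 ≤ c) (hAc : 2 * A ≤ c)
    (hA : ∀ r ∈ Icc τ T, |x r| ≤ A) {p q : ℝ} (hqp : q ≤ p) (hpT : p ≤ T) :
    max (|x p - x q| - c) 0 ≤ |x (min p τ) - x (min q τ)| := by
  refine max_le ?_ (abs_nonneg _)
  rcases le_or_gt q τ with hq | hq
  · rcases le_or_gt p τ with hp | hp
    · rw [min_eq_left hp, min_eq_left hq]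
      linarith
    · rw [min_eq_right hp.le, min_eq_left hq]
      have hp' := hA p ⟨hp.le, hpT⟩
      have hτ := hA τ ⟨le_rfl, hp.le.trans hpT⟩
      have := abs_sub_le (x p) (x τ) (x q)
      have := abs_sub (x p) (x τ)
      linarith
  · have hp := hA p ⟨hq.le.trans hqp, hpT⟩
    have hq' := hA q ⟨hq.le, hqp.trans hpT⟩
    have := abs_sub (x p) (x q)
    linarith [abs_nonneg (x (min p τ) - x (min q τ))]

theorem truncSum_le_eVariationOn_of_abs_le (hc : 0 ≤ c) (hAc : 2 * A ≤ c)
    (hA : ∀ r ∈ Icc τ T, |x r| ≤ A) (hsτ : s ≤ τ) (hx : BoundedVariationOn x (Icc s τ))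
    {n : ℕ} {u : Fin (n + 1) → ℝ} (hu : Monotone u) (us : ∀ i, u i ∈ Icc s T) :
    truncSum x c u ≤ (eVariationOn x (Icc s τ)).toReal :=
  calc truncSum x c u
      ≤ ∑ i : Fin n, |x (min (u i.succ) τ) - x (min (u i.castSucc) τ)| :=
        Finset.sum_le_sum fun i _ => max_abs_sub_sub_le_abs_sub_min hc hAc hA
          (hu (Fin.castSucc_le_succ i)) (us _).2
    _ ≤ (eVariationOn x (Icc s τ)).toReal :=
        hx.sum_abs_sub_le (fun _ _ hij => min_le_min_right τ (hu hij))
          fun i => ⟨le_min (us i).1 hsτ, min_le_right _ _⟩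

theorem sum_range_le_truncVarR {t : ℕ → ℝ} (ht : Monotone t) {N : ℕ} (htT : t N ≤ T)
    (hB : ∀ n (u : Fin (n + 1) → ℝ), Monotone u → u 0 = t 0 → u (Fin.last n) = T →
      truncSum x c u ≤ B) :
    ∑ i ∈ range N, max (|x (t (i + 1)) - x (t i)| - c) 0 ≤ truncVarR x c (t 0) T := by
  set u : Fin (N + 2) → ℝ := fun i => if (i : ℕ) ≤ N then t i else T
  have hu : Monotone u := by
    intro i j hij
    simp only [u]
    split_ifs with hi hj hj
    · exact ht hij
    · exact htT.trans' (ht hi)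
    · exact absurd (le_trans (Fin.le_def.1 hij) hj) hi
    · exact le_rfl
  refine le_trans ?_ (truncSum_le_truncVarR hB hu (by simp [u]) (by simp [u]))
  rw [truncSum, Fin.sum_univ_castSucc, ← Fin.sum_univ_eq_sum_range]
  refine le_add_of_le_of_nonneg (le_of_eq (Finset.sum_congr rfl fun i _ => ?_)) (le_max_right _ _)
  simp [u, Nat.succ_le_of_lt i.2, i.2.le]

end TruncatedVariation

structure IsZigzag (t a : ℕ → ℝ) (x : ℝ → ℝ) : Prop where
  strictMono : StrictMono t
  t_zero : t 0 = 0
  tendsto_t : Tendsto t atTop (𝓝 1)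
  antitone_a : Antitone a
  a_pos : ∀ n, 0 < a n
  tendsto_a : Tendsto a atTop (𝓝 0)
  eq_up : ∀ n : ℕ, ∀ s ∈ Ico (t (2 * n)) (t (2 * n + 1)),
    x s = a n * (s - t (2 * n)) / (t (2 * n + 1) - t (2 * n))
  eq_down : ∀ n : ℕ, ∀ s ∈ Ico (t (2 * n + 1)) (t (2 * n + 2)),
    x s = a n * (t (2 * n + 2) - s) / (t (2 * n + 2) - t (2 * n + 1))
  x_one : x 1 = 0

namespace IsZigzag

variable {t a : ℕ → ℝ} {x : ℝ → ℝ}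

theorem apply_even (hz : IsZigzag t a x) (n : ℕ) : x (t (2 * n)) = 0 := by
  simp [hz.eq_up n _ ⟨le_rfl, hz.strictMono (by omega)⟩]

theorem apply_odd (hz : IsZigzag t a x) (n : ℕ) : x (t (2 * n + 1)) = a n := by
  have hd : t (2 * n + 2) - t (2 * n + 1) ≠ 0 := (sub_pos.2 (hz.strictMono (by omega))).ne'
  rw [hz.eq_down n _ ⟨le_rfl, hz.strictMono (by omega)⟩, mul_div_assoc, div_self hd, mul_one]

theorem monotoneOn_even (hz : IsZigzag t a x) (n : ℕ) :
    MonotoneOn x (Icc (t (2 * n)) (t (2 * n + 1))) := by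
  have hd : 0 < t (2 * n + 1) - t (2 * n) := sub_pos.2 (hz.strictMono (by omega))
  have hg : Monotone fun s => a n * (s - t (2 * n)) / (t (2 * n + 1) - t (2 * n)) := by
    intro p q hpq
    have := (hz.a_pos n).le
    dsimp only
    gcongr
  refine (hg.monotoneOn _).congr fun s hs => ?_
  rcases hs.2.lt_or_eq with h | rfl
  · exact (hz.eq_up n s ⟨hs.1, h⟩).symm
  · dsimp only
    rw [hz.apply_odd, mul_div_assoc, div_self hd.ne', mul_one]

theorem antitoneOn_odd (hz : IsZigzag t a x) (n : ℕ) :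
    AntitoneOn x (Icc (t (2 * n + 1)) (t (2 * n + 2))) := by
  have hg : Antitone fun s => a n * (t (2 * n + 2) - s) / (t (2 * n + 2) - t (2 * n + 1)) := by
    intro p q hpq
    have := (hz.a_pos n).le
    have : 0 < t (2 * n + 2) - t (2 * n + 1) := sub_pos.2 (hz.strictMono (by omega))
    dsimp only
    gcongr
  refine (hg.antitoneOn _).congr fun s hs => ?_
  rcases hs.2.lt_or_eq with h | rfl
  · exact (hz.eq_down n s ⟨hs.1, h⟩).symm
  · rw [show 2 * n + 2 = 2 * (n + 1) by ring, hz.apply_even]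
    simp

theorem apply_mem_Icc (hz : IsZigzag t a x) {k : ℕ} {s : ℝ} (hs : s ∈ Icc (t k) (t (k + 1))) :
    x s ∈ Icc 0 (a (k / 2)) := by
  have hle {i j : ℕ} (hij : i ≤ j) : t i ≤ t j := hz.strictMono.monotone hij
  obtain ⟨m, rfl | rfl⟩ := Nat.even_or_odd' k
  · have hmono := hz.monotoneOn_even m
    have h0 := hmono ⟨le_rfl, hle (by omega)⟩ hs hs.1
    have h1 := hmono hs ⟨hle (by omega), le_rfl⟩ hs.2
    rw [hz.apply_even] at h0
    rw [hz.apply_odd] at h1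
    exact ⟨h0, by simpa using h1⟩
  · have hanti := hz.antitoneOn_odd m
    have h0 := hanti hs ⟨hle (by omega), le_rfl⟩ hs.2
    have h1 := hanti ⟨le_rfl, hle (by omega)⟩ hs hs.1
    rw [show 2 * m + 2 = 2 * (m + 1) by ring, hz.apply_even] at h0
    rw [hz.apply_odd] at h1
    exact ⟨h0, by simpa [show (2 * m + 1) / 2 = m by omega] using h1⟩

theorem boundedVariationOn_Icc (hz : IsZigzag t a x) (M : ℕ) :
    BoundedVariationOn x (Icc 0 (t M)) := by
  have hpiece (k : ℕ) : BoundedVariationOn x (Icc (t k) (t (k + 1))) := by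
    have hk : t k ≤ t (k + 1) := hz.strictMono.monotone (Nat.le_succ k)
    have hx : LocallyBoundedVariationOn x (Icc (t k) (t (k + 1))) := by
      obtain ⟨m, rfl | rfl⟩ := Nat.even_or_odd' k
      · exact (hz.monotoneOn_even m).locallyBoundedVariationOn
      · exact (hz.antitoneOn_odd m).locallyBoundedVariationOn
    simpa using hx _ _ (left_mem_Icc.2 hk) (right_mem_Icc.2 hk)
  rw [BoundedVariationOn, ← hz.t_zero, ← eVariationOn.sum' x hz.strictMono.monotone]
  exact ENNReal.sum_ne_top.2 fun k _ => hpiece k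

theorem abs_apply_le (hz : IsZigzag t a x) (N : ℕ) :
    ∀ r ∈ Icc (t (2 * N)) 1, |x r| ≤ a N := by
  rintro r ⟨hNr, hr1⟩
  rcases hr1.lt_or_eq with hr1 | rfl
  · obtain ⟨m, hm⟩ := ((tendsto_order.1 hz.tendsto_t).1 r hr1).exists
    obtain ⟨k, hNk, hk⟩ := hz.strictMono.monotone.exists_mem_Ico_succ hNr hm
    have hxr := hz.apply_mem_Icc (Ico_subset_Icc_self hk)
    rw [abs_of_nonneg hxr.1]
    exact hxr.2.trans (hz.antitone_a (by omega))
  · simpa [hz.x_one] using (hz.a_pos N).le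

theorem exists_truncVarR_le (hz : IsZigzag t a x) {u : ℝ} (hu : u < 1) :
    ∃ C, ∀ c, 0 ≤ c → truncVarR x c 0 u ≤ C := by
  obtain ⟨M, hM⟩ := ((tendsto_order.1 hz.tendsto_t).1 u hu).exists
  exact ⟨_, fun c hc => truncVarR_le_eVariationOn hc (Icc_subset_Icc_right hM.le)
    (hz.boundedVariationOn_Icc M)⟩

theorem exists_truncSum_le (hz : IsZigzag t a x) {c : ℝ} (hc : 0 < c) :
    ∃ B, ∀ n (u : Fin (n + 1) → ℝ), Monotone u → u 0 = 0 → u (Fin.last n) = 1 →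
      truncSum x c u ≤ B := by
  obtain ⟨M, hM⟩ := (hz.tendsto_a.eventually (gt_mem_nhds (half_pos hc))).exists
  have htM : 0 ≤ t (2 * M) := hz.t_zero ▸ hz.strictMono.monotone (Nat.zero_le _)
  exact ⟨_, fun n u hu h0 h1 => truncSum_le_eVariationOn_of_abs_le hc.le (by linarith)
    (hz.abs_apply_le M) htM (hz.boundedVariationOn_Icc (2 * M)) hu
    fun i => ⟨h0 ▸ hu (Fin.zero_le i), h1 ▸ hu (Fin.le_last i)⟩⟩

theorem two_mul_sum_sub_le (hz : IsZigzag t a x) (c : ℝ) (N : ℕ) :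
    2 * ∑ k ∈ range N, (a k - c) ≤
      ∑ i ∈ range (2 * N), max (|x (t (i + 1)) - x (t i)| - c) 0 := by
  induction N with
  | zero => simp
  | succ N ih =>
    rw [show 2 * (N + 1) = 2 * N + 1 + 1 by ring, sum_range_succ, sum_range_succ, sum_range_succ,
      show 2 * N + 1 + 1 = 2 * (N + 1) by ring, hz.apply_even, hz.apply_odd, hz.apply_even,
      sub_zero, zero_sub, abs_neg, abs_of_pos (hz.a_pos N)]
    linarith [le_max_left (a N - c) 0]

theorem two_mul_sum_sub_le_truncVarR (hz : IsZigzag t a x) {c : ℝ} (hc : 0 < c) (N : ℕ) :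
    2 * ∑ k ∈ range N, (a k - c) ≤ truncVarR x c 0 1 := by
  obtain ⟨B, hB⟩ := hz.exists_truncSum_le hc
  have htN : t (2 * N) ≤ 1 := hz.strictMono.monotone.ge_of_tendsto hz.tendsto_t _
  rw [← hz.t_zero] at hB ⊢
  exact (hz.two_mul_sum_sub_le c N).trans (sum_range_le_truncVarR hz.strictMono.monotone htN hB)

theorem tendsto_truncVarR_atTop (hz : IsZigzag t a x) (ha : ¬ Summable a) :
    Tendsto (fun c => truncVarR x c 0 1) (𝓝[>] 0) atTop := by
  refine tendsto_atTop.2 fun b => ?_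
  obtain ⟨N, hN⟩ := (((not_summable_iff_tendsto_nat_atTop_of_nonneg fun n => (hz.a_pos n).le).1
    ha).eventually_ge_atTop (b / 2 + 1)).exists
  filter_upwards [Ioo_mem_nhdsGT (show (0 : ℝ) < 1 / (N + 1) by positivity)] with c hc
  have hNc : N * c ≤ 1 := by
    have := (lt_div_iff₀ (by positivity)).1 hc.2
    nlinarith [hc.1]
  have := hz.two_mul_sum_sub_le_truncVarR hc.1 N
  rw [sum_sub_distrib, sum_const, card_range, nsmul_eq_mul] at this
  linarith

end IsZigzag

/-- With the normalization `φ(c) = 1/(1 + TV^c(x¹,[0,1]))` for the zigzag function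
`x¹` (with `Σ aₙ = ∞`), `φ(c)·TV^c(x¹,[0,t]) → 0` for `t ∈ [0,1)` while
`φ(c)·TV^c(x¹,[0,1]) → 1` as `c → 0+`. -/
theorem zigzag_normalized_limits (t : ℕ → ℝ) (hts : StrictMono t) (ht0 : t 0 = 0)
    (htlim : Tendsto t atTop (nhds 1))
    (a : ℕ → ℝ) (ha : Antitone a) (hapos : ∀ n, 0 < a n)
    (halim : Tendsto a atTop (nhds 0)) (hadiv : ¬ Summable a)
    (x : ℝ → ℝ)
    (hup : ∀ n : ℕ, ∀ s ∈ Set.Ico (t (2 * n)) (t (2 * n + 1)),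
      x s = a n * (s - t (2 * n)) / (t (2 * n + 1) - t (2 * n)))
    (hdown : ∀ n : ℕ, ∀ s ∈ Set.Ico (t (2 * n + 1)) (t (2 * n + 2)),
      x s = a n * (t (2 * n + 2) - s) / (t (2 * n + 2) - t (2 * n + 1)))
    (hx1 : x 1 = 0) :
    (∀ u ∈ Set.Ico (0 : ℝ) 1,
      Tendsto (fun c => (1 + truncVarR x c 0 1)⁻¹ * truncVarR x c 0 u)
        (nhdsWithin 0 (Set.Ioi 0)) (nhds 0)) ∧
      Tendsto (fun c => (1 + truncVarR x c 0 1)⁻¹ * truncVarR x c 0 1)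
        (nhdsWithin 0 (Set.Ioi 0)) (nhds 1) := by
  have hz : IsZigzag t a x := ⟨hts, ht0, htlim, ha, hapos, halim, hup, hdown, hx1⟩
  have hφ : Tendsto (fun c => (1 + truncVarR x c 0 1)⁻¹) (𝓝[>] 0) (𝓝 0) :=
    tendsto_inv_atTop_zero.comp
      (tendsto_atTop_add_const_left _ 1 (hz.tendsto_truncVarR_atTop hadiv))
  refine ⟨fun u hu => ?_, ?_⟩
  · obtain ⟨C, hC⟩ := hz.exists_truncVarR_le hu.2
    refine hφ.zero_mul_isBoundedUnder_le ⟨C, eventually_map.2 ?_⟩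
    filter_upwards [self_mem_nhdsWithin] with c hc
    simpa [abs_of_nonneg truncVarR_nonneg] using hC c (le_of_lt hc)
  · have hV (c : ℝ) : (1 + truncVarR x c 0 1)⁻¹ * truncVarR x c 0 1 =
        1 - (1 + truncVarR x c 0 1)⁻¹ := by
      have : 0 < 1 + truncVarR x c 0 1 := by linarith [@truncVarR_nonneg x c 0 1]
      field_simp
      ring
    simpa [hV] using tendsto_const_nhds.sub hφ
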